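/- arXiv:1610.06712 — 2 statements merged into one kernel-verified Lean document; each statement's English description precedes it below -/
import Mathlib

section
/- Let g : ℝ → ℝ be nonnegative and integrable and let f_u : ℝ → ℝ be a nonnegative, nondecreasing measurable function such that f_u·g is integrable on every interval (-∞, t]. Define B(t) = ∫_{-∞}^{t} f_u(r) g(r) dr + ∫_{t}^{+∞} g(r) dr. Then (i) for every t ∈ ℝ, B(t) ≥ ∫_ℝ min{f_u(r), 1} g(r) dr, and (ii) the infimum of B(t) over t ∈ ℝ equals ∫_ℝ min{f_u(r), 1} g(r) dr. -/
/-!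
Pointwise, `f = min f 1 + (f - 1)⁺` and `1 = min f 1 + (1 - f)⁺`, so
`B(t) = ∫ min f 1 · g + ∫_{r ≤ t} (f - 1)⁺ g + ∫_{r > t} (1 - f)⁺ g`, and the two slack terms
are nonnegative. Since `f` is nondecreasing, `{f > 1}` is an up-set of `ℝ`: either it is
empty, and the slack tends to `0` as `t → ∞`; or it is everything, and the slack tends to `0`
as `t → -∞`; or else it is bounded below, and the slack vanishes at its infimum.
-/

open MeasureTheory Set Filter Topology

theorem Monotone.forall_le_or_forall_lt_or_exists_threshold {α β : Type*}
    [ConditionallyCompleteLinearOrder α] [LinearOrder β] {f : α → β} (hf : Monotone f) (c : β) :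
    (∀ x, f x ≤ c) ∨ (∀ x, c < f x) ∨ ∃ t, (∀ x < t, f x ≤ c) ∧ ∀ x, t < x → c < f x := by
  by_cases hne : {x | c < f x}.Nonempty
  swap
  · exact Or.inl fun x => not_lt.mp fun hx => hne ⟨x, hx⟩
  by_cases hbdd : BddBelow {x | c < f x}
  swap
  · refine Or.inr (Or.inl fun x => ?_)
    obtain ⟨y, hy, hyx⟩ := not_bddBelow_iff.mp hbdd x
    exact hy.trans_le (hf hyx.le)
  refine Or.inr (Or.inr ⟨sInf {x | c < f x}, fun x hx => ?_, fun x hx => ?_⟩)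
  · exact not_lt.mp fun hcx => hx.not_ge (csInf_le hbdd hcx)
  · obtain ⟨y, hy, hyx⟩ := exists_lt_of_csInf_lt hne hx
    exact hy.trans_le (hf hyx.le)

theorem ciInf_eq_of_forall_le_of_tendsto {ι : Type*} {B : ι → ℝ} {l : Filter ι} [l.NeBot]
    {M : ℝ} (hle : ∀ i, M ≤ B i) (hlim : Tendsto B l (𝓝 M)) : ⨅ i, B i = M :=
  have : Nonempty ι := NeBot.nonempty l
  le_antisymm (ge_of_tendsto' hlim fun i => ciInf_le ⟨M, forall_mem_range.mpr hle⟩ i)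
    (le_ciInf hle)

theorem min_one_add_max_sub_one (a : ℝ) : min a 1 + max (a - 1) 0 = a := by
  rcases le_total a 1 with h | h
  · rw [min_eq_left h, max_eq_right (by linarith), add_zero]
  · rw [min_eq_right h, max_eq_left (by linarith)]
    ring

theorem min_one_add_max_one_sub (a : ℝ) : min a 1 + max (1 - a) 0 = 1 := by
  rcases le_total a 1 with h | h
  · rw [min_eq_left h, max_eq_left (by linarith)]
    ring
  · rw [min_eq_right h, max_eq_right (by linarith), add_zero]

/-- The right-hand side `B(t)` of the Gallager bound with truncation point `t`. -/
noncomputable def gallagerBound (μ : Measure ℝ) (f g : ℝ → ℝ) (t : ℝ) : ℝ :=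
  (∫ r in Iic t, f r * g r ∂μ) + ∫ r in Ioi t, g r ∂μ

noncomputable def gallagerSlack (μ : Measure ℝ) (f g : ℝ → ℝ) (t : ℝ) : ℝ :=
  (∫ r in Iic t, max (f r - 1) 0 * g r ∂μ) + ∫ r in Ioi t, max (1 - f r) 0 * g r ∂μ

section

variable {μ : Measure ℝ} {f g : ℝ → ℝ}

theorem gallagerSlack_nonneg (hg : ∀ r, 0 ≤ g r) (t : ℝ) : 0 ≤ gallagerSlack μ f g t :=
  add_nonneg
    (setIntegral_nonneg measurableSet_Iic fun r _ => mul_nonneg (le_max_right _ _) (hg r))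
    (setIntegral_nonneg measurableSet_Ioi fun r _ => mul_nonneg (le_max_right _ _) (hg r))

theorem gallagerBound_eq_integral_add_gallagerSlack (hf : ∀ r, 0 ≤ f r)
    (hf_meas : AEStronglyMeasurable f μ) (hg : Integrable g μ)
    {t : ℝ} (hfg : IntegrableOn (fun r => f r * g r) (Iic t) μ) :
    gallagerBound μ f g t = (∫ r, min (f r) 1 * g r ∂μ) + gallagerSlack μ f g t := by
  have h_min : Integrable (fun r => min (f r) 1 * g r) μ := by
    refine hg.mono ((hf_meas.inf aestronglyMeasurable_const).mul hg.1) (ae_of_all _ fun r => ?_)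
    rw [norm_mul, Real.norm_of_nonneg (le_min (hf r) zero_le_one)]
    exact mul_le_of_le_one_left (norm_nonneg _) (min_le_right _ _)
  have h_above : IntegrableOn (fun r => max (f r - 1) 0 * g r) (Iic t) μ := by
    refine Integrable.mono hfg ((hf_meas.sub aestronglyMeasurable_const).sup
      aestronglyMeasurable_const |>.mul hg.1).restrict (ae_of_all _ fun r => ?_)
    rw [norm_mul, norm_mul, Real.norm_of_nonneg (le_max_right _ _), Real.norm_of_nonneg (hf r)]
    exact mul_le_mul_of_nonneg_right (max_le (by linarith) (hf r)) (norm_nonneg _)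
  have h_below : Integrable (fun r => max (1 - f r) 0 * g r) μ := by
    refine hg.mono ((aestronglyMeasurable_const.sub hf_meas).sup aestronglyMeasurable_const
      |>.mul hg.1) (ae_of_all _ fun r => ?_)
    rw [norm_mul, Real.norm_of_nonneg (le_max_right _ _)]
    exact mul_le_of_le_one_left (norm_nonneg _) (max_le (by linarith [hf r]) zero_le_one)
  have h_Iic : ∫ r in Iic t, f r * g r ∂μ =
      (∫ r in Iic t, min (f r) 1 * g r ∂μ) + ∫ r in Iic t, max (f r - 1) 0 * g r ∂μ := by
    rw [← integral_add h_min.integrableOn h_above]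
    simp only [← add_mul, min_one_add_max_sub_one]
  have h_Ioi : ∫ r in Ioi t, g r ∂μ =
      (∫ r in Ioi t, min (f r) 1 * g r ∂μ) + ∫ r in Ioi t, max (1 - f r) 0 * g r ∂μ := by
    rw [← integral_add h_min.integrableOn h_below.integrableOn]
    simp only [← add_mul, min_one_add_max_one_sub, one_mul]
  rw [gallagerBound, gallagerSlack, h_Iic, h_Ioi,
    ← intervalIntegral.integral_Iic_add_Ioi h_min.integrableOn h_min.integrableOn]
  ring

theorem exists_tendsto_gallagerSlack_zero [NullSingletonClass μ] (hf : Monotone f) :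
    ∃ l : Filter ℝ, l.NeBot ∧ Tendsto (gallagerSlack μ f g) l (𝓝 0) := by
  have h_above_zero {s : Set ℝ} (h : ∀ r ∈ s, f r ≤ 1) :
      ∫ r in s, max (f r - 1) 0 * g r ∂μ = 0 :=
    setIntegral_eq_zero_of_forall_eq_zero fun r hr => by
      rw [max_eq_right (by linarith [h r hr]), zero_mul]
  have h_below_zero {s : Set ℝ} (h : ∀ r ∈ s, 1 ≤ f r) :
      ∫ r in s, max (1 - f r) 0 * g r ∂μ = 0 :=
    setIntegral_eq_zero_of_forall_eq_zero fun r hr => by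
      rw [max_eq_right (by linarith [h r hr]), zero_mul]
  rcases hf.forall_le_or_forall_lt_or_exists_threshold 1 with h | h | ⟨t, h_lt, h_gt⟩
  · have h_slack : gallagerSlack μ f g = fun t => ∫ r in Ioi t, max (1 - f r) 0 * g r ∂μ :=
      funext fun t => by rw [gallagerSlack, h_above_zero fun r _ => h r, zero_add]
    exact ⟨atTop, inferInstance, h_slack ▸ tendsto_integral_Ioi_zero tendsto_id⟩
  · have h_slack : gallagerSlack μ f g = fun t => ∫ r in Iic t, max (f r - 1) 0 * g r ∂μ :=
      funext fun t => by rw [gallagerSlack, h_below_zero fun r _ => (h r).le, add_zero]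
    exact ⟨atBot, inferInstance, h_slack ▸ tendsto_integral_Iic_zero tendsto_id⟩
  · -- `f ≤ 1` is only known on `Iio t`, which differs from `Iic t` by a null set.
    have h_slack : gallagerSlack μ f g t = 0 := by
      rw [gallagerSlack, setIntegral_congr_set Iio_ae_eq_Iic.symm,
        h_above_zero (s := Iio t) h_lt, h_below_zero (s := Ioi t) fun r hr => (h_gt r hr).le,
        add_zero]
    exact ⟨pure t, inferInstance, h_slack ▸ tendsto_pure_nhds _ t⟩

end

theorem stmt_4 (g f_u : ℝ → ℝ)
    (hg_nonneg : ∀ r, 0 ≤ g r) (hg_int : Integrable g)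
    (hf_nonneg : ∀ r, 0 ≤ f_u r) (hf_mono : Monotone f_u) (hf_meas : Measurable f_u)
    (hfg_int : ∀ t : ℝ, IntegrableOn (fun r => f_u r * g r) (Set.Iic t)) :
    (∀ t : ℝ,
      (∫ r, min (f_u r) 1 * g r) ≤
        (∫ r in Set.Iic t, f_u r * g r) + (∫ r in Set.Ioi t, g r)) ∧
    (⨅ t : ℝ, (∫ r in Set.Iic t, f_u r * g r) + (∫ r in Set.Ioi t, g r)) =
      ∫ r, min (f_u r) 1 * g r := by
  have h_eq (t : ℝ) := gallagerBound_eq_integral_add_gallagerSlack hf_nonneg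
    hf_meas.aestronglyMeasurable hg_int (hfg_int t)
  have h_le (t : ℝ) : ∫ r, min (f_u r) 1 * g r ≤ gallagerBound volume f_u g t :=
    (h_eq t).symm ▸ le_add_of_nonneg_right (gallagerSlack_nonneg hg_nonneg t)
  refine ⟨h_le, ?_⟩
  obtain ⟨l, hl, h_tendsto⟩ := exists_tendsto_gallagerSlack_zero (μ := volume) (g := g) hf_mono
  refine ciInf_eq_of_forall_le_of_tendsto (B := gallagerBound volume f_u g) (l := l) h_le ?_
  rw [funext h_eq]
  simpa only [add_zero] using h_tendsto.const_add (∫ r, min (f_u r) 1 * g r)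
end

section
/- Let n ≥ 2 be an integer, let d_min be a positive integer with d_min ≤ n, and let A_1, …, A_n be nonnegative integers with A_d = 0 for all d < d_min, A_{d_min} ≥ 1, and Σ_{d=1}^n A_d ≥ 3. For each d define p₂(r, d) = (Γ(n/2) / (√π · Γ((n−1)/2))) · ∫_0^{arccos(√d / r)} sin^{n−2}(φ) dφ for r > √d and p₂(r, d) = 0 for 0 ≤ r ≤ √d, and set F(r) = Σ_{d=1}^n A_d · p₂(r, d). Then there exists a unique r₁ ∈ (√(d_min), +∞) such that F(r₁) = 1. -/
/-!
Each `p₂(·, d)` is, for `r > 0`, a constant times `∫₀^{θ(r)} sin^{n-2}` with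
`θ(r) = arccos (√d / r)` increasing from `0` (for `r ≤ √d`) towards `π / 2`; by Wallis' integral the
Gamma normalisation makes its limit `1 / 2`. Hence `F` is continuous, vanishes at `√d_min`, is
strictly increasing beyond it (through the term `A_{d_min} p₂(·, d_min)`) and tends to
`∑ A_d / 2 > 1`, so it crosses `1` exactly once.
-/

open Real Set Filter Topology

theorem integral_sin_pow_zero_pi_div_two (m : ℕ) :
    ∫ x in (0 : ℝ)..π / 2, sin x ^ m = √π * Gamma ((m + 1) / 2) / (2 * Gamma (m / 2 + 1)) := by
  induction m using Nat.twoStepInduction with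
  | zero => norm_num [Gamma_one_half_eq, mul_self_sqrt pi_pos.le]
  | one =>
    have hsqrt : √π ≠ 0 := (sqrt_pos.mpr pi_pos).ne'
    have h : Gamma (3 / 2) = 1 / 2 * √π := by
      rw [show (3 : ℝ) / 2 = 1 / 2 + 1 by norm_num, Gamma_add_one (by norm_num), Gamma_one_half_eq]
    norm_num [integral_sin, h]
    field_simp
  | more m ih _ =>
    have hG : Gamma ((m : ℝ) / 2 + 1) ≠ 0 := (Gamma_pos_of_pos (by positivity)).ne'
    have h₁ : Gamma (((m : ℝ) + 1) / 2 + 1) = (m + 1) / 2 * Gamma ((m + 1) / 2) :=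
      Gamma_add_one (by positivity)
    have h₂ : Gamma (((m : ℝ) / 2 + 1) + 1) = (m / 2 + 1) * Gamma (m / 2 + 1) :=
      Gamma_add_one (by positivity)
    rw [integral_sin_pow, ih, sin_zero, cos_pi_div_two]
    push_cast
    rw [show ((m : ℝ) + 2 + 1) / 2 = (m + 1) / 2 + 1 by ring, h₁,
      show ((m : ℝ) + 2) / 2 + 1 = (m / 2 + 1) + 1 by ring, h₂]
    field_simp
    ring

noncomputable def capConst (n : ℕ) : ℝ := Gamma (n / 2) / (√π * Gamma ((n - 1) / 2))

theorem capConst_pos {n : ℕ} (hn : 2 ≤ n) : 0 < capConst n := by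
  have hn' : (2 : ℝ) ≤ n := by exact_mod_cast hn
  unfold capConst
  have := Gamma_pos_of_pos (by linarith : (0 : ℝ) < n / 2)
  have := Gamma_pos_of_pos (by linarith : (0 : ℝ) < (n - 1) / 2)
  positivity

theorem capConst_mul_integral_sin_pow {n : ℕ} (hn : 2 ≤ n) :
    capConst n * ∫ x in (0 : ℝ)..π / 2, sin x ^ (n - 2) = 1 / 2 := by
  have hn' : (2 : ℝ) ≤ n := by exact_mod_cast hn
  have := Gamma_pos_of_pos (by linarith : (0 : ℝ) < n / 2)
  have := Gamma_pos_of_pos (by linarith : (0 : ℝ) < (n - 1) / 2)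
  have := sqrt_pos.mpr pi_pos
  rw [integral_sin_pow_zero_pi_div_two, Nat.cast_sub hn, capConst]
  rw [show ((n : ℝ) - (2 : ℕ) + 1) / 2 = (n - 1) / 2 by push_cast; ring,
    show ((n : ℝ) - (2 : ℕ)) / 2 + 1 = n / 2 by push_cast; ring]
  field_simp

noncomputable def sinPowIntegral (m : ℕ) (θ : ℝ) : ℝ := ∫ t in (0 : ℝ)..θ, sin t ^ m

theorem continuous_sinPowIntegral (m : ℕ) : Continuous (sinPowIntegral m) :=
  intervalIntegral.continuous_primitive
    (fun _ _ => (by fun_prop : Continuous fun t => sin t ^ m).intervalIntegrable _ _) 0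

theorem strictMonoOn_sinPowIntegral (m : ℕ) : StrictMonoOn (sinPowIntegral m) (Icc 0 π) := by
  refine strictMonoOn_of_deriv_pos (convex_Icc 0 π) (continuous_sinPowIntegral m).continuousOn ?_
  intro θ hθ
  rw [interior_Icc] at hθ
  change 0 < deriv (fun θ => ∫ t in (0 : ℝ)..θ, sin t ^ m) θ
  rw [Continuous.deriv_integral _ (by fun_prop)]
  exact pow_pos (sin_pos_of_pos_of_lt_pi hθ.1 hθ.2) m

/-- The paper's `p₂(r, d)`. For `0 < r ≤ √d` it vanishes because `arccos x = 0` for `x ≥ 1`. -/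
noncomputable def capProb (n d : ℕ) (r : ℝ) : ℝ :=
  capConst n * sinPowIntegral (n - 2) (arccos (√d / r))

theorem capProb_of_le {n d : ℕ} {r : ℝ} (hr : 0 < r) (h : r ≤ √d) : capProb n d r = 0 := by
  rw [capProb, arccos_of_one_le ((one_le_div hr).mpr h), sinPowIntegral,
    intervalIntegral.integral_same, mul_zero]

theorem monotoneOn_capProb {n : ℕ} (hn : 2 ≤ n) (d : ℕ) : MonotoneOn (capProb n d) (Ioi 0) := by
  intro r hr r' _ hrr'
  have harccos : arccos (√d / r) ≤ arccos (√d / r') :=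
    antitone_arccos (div_le_div_of_nonneg_left (sqrt_nonneg _) hr hrr')
  exact mul_le_mul_of_nonneg_left
    ((strictMonoOn_sinPowIntegral _).monotoneOn ⟨arccos_nonneg _, arccos_le_pi _⟩
      ⟨arccos_nonneg _, arccos_le_pi _⟩ harccos) (capConst_pos hn).le

theorem strictMonoOn_capProb {n : ℕ} (hn : 2 ≤ n) {d : ℕ} (hd : 0 < d) :
    StrictMonoOn (capProb n d) (Ici √d) := by
  intro r hr r' hr' hrr'
  have hsqrt : 0 < √d := sqrt_pos.mpr (by exact_mod_cast hd)
  have hr₀ : 0 < r := hsqrt.trans_le hr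
  have hmem : ∀ s ∈ Ici √d, √d / s ∈ Icc (-1) 1 := fun s hs =>
    ⟨by linarith [div_nonneg hsqrt.le (hsqrt.le.trans hs)],
      (div_le_one (hsqrt.trans_le hs)).mpr hs⟩
  have harccos : arccos (√d / r) < arccos (√d / r') :=
    strictAntiOn_arccos (hmem r' hr') (hmem r hr) (div_lt_div_of_pos_left hsqrt hr₀ hrr')
  exact mul_lt_mul_of_pos_left
    (strictMonoOn_sinPowIntegral _ ⟨arccos_nonneg _, arccos_le_pi _⟩
      ⟨arccos_nonneg _, arccos_le_pi _⟩ harccos) (capConst_pos hn)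

theorem continuousOn_capProb (n d : ℕ) : ContinuousOn (capProb n d) (Ioi 0) := by
  have hratio : ContinuousOn (fun r : ℝ => √d / r) (Ioi 0) :=
    continuousOn_const.div continuousOn_id fun _ hr => ne_of_gt hr
  exact continuousOn_const.mul
    ((continuous_sinPowIntegral _).comp_continuousOn (continuous_arccos.comp_continuousOn hratio))

theorem tendsto_capProb_atTop {n : ℕ} (hn : 2 ≤ n) (d : ℕ) :
    Tendsto (capProb n d) atTop (𝓝 (1 / 2)) := by
  have hratio : Tendsto (fun r : ℝ => √d / r) atTop (𝓝 0) :=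
    tendsto_const_nhds.div_atTop tendsto_id
  have h := ((continuous_sinPowIntegral (n - 2)).comp continuous_arccos).tendsto 0
    |>.comp hratio |>.const_mul (capConst n)
  rw [Function.comp_apply, arccos_zero, sinPowIntegral, capConst_mul_integral_sin_pow hn] at h
  exact h

noncomputable def unionBound (n : ℕ) (A : ℕ → ℕ) (r : ℝ) : ℝ :=
  ∑ d ∈ Finset.Icc 1 n, (A d : ℝ) * capProb n d r

theorem unionBound_sqrt_eq_zero {n : ℕ} {A : ℕ → ℕ} {dmin : ℕ} (hdmin : 1 ≤ dmin)
    (hA_zero : ∀ d, d < dmin → A d = 0) : unionBound n A √dmin = 0 := by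
  refine Finset.sum_eq_zero fun d _ => ?_
  rcases lt_or_ge d dmin with hd | hd
  · rw [hA_zero d hd, Nat.cast_zero, zero_mul]
  · rw [capProb_of_le (sqrt_pos.mpr (by exact_mod_cast hdmin))
      (sqrt_le_sqrt (by exact_mod_cast hd)), mul_zero]

theorem continuousOn_unionBound (n : ℕ) (A : ℕ → ℕ) : ContinuousOn (unionBound n A) (Ioi 0) :=
  continuousOn_finsetSum _ fun d _ => continuousOn_const.mul (continuousOn_capProb n d)

theorem strictMonoOn_unionBound {n : ℕ} {A : ℕ → ℕ} {dmin : ℕ} (hn : 2 ≤ n) (hdmin : 1 ≤ dmin)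
    (hdn : dmin ≤ n) (hA_min : 1 ≤ A dmin) : StrictMonoOn (unionBound n A) (Ici √dmin) := by
  have hsqrt : 0 < √dmin := sqrt_pos.mpr (by exact_mod_cast hdmin)
  intro r hr r' hr' hrr'
  refine Finset.sum_lt_sum (fun d _ => ?_) ⟨dmin, Finset.mem_Icc.mpr ⟨hdmin, hdn⟩, ?_⟩
  · exact mul_le_mul_of_nonneg_left (monotoneOn_capProb hn d (hsqrt.trans_le hr)
      (hsqrt.trans_le hr') hrr'.le) (Nat.cast_nonneg _)
  · exact mul_lt_mul_of_pos_left (strictMonoOn_capProb hn hdmin hr hr' hrr')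
      (by exact_mod_cast hA_min)

theorem tendsto_unionBound_atTop {n : ℕ} (hn : 2 ≤ n) (A : ℕ → ℕ) :
    Tendsto (unionBound n A) atTop (𝓝 ((∑ d ∈ Finset.Icc 1 n, (A d : ℝ)) / 2)) := by
  rw [div_eq_mul_one_div, Finset.sum_mul]
  exact tendsto_finsetSum _ fun d _ => (tendsto_capProb_atTop hn d).const_mul _

theorem stmt_16 (n : ℕ) (hn : 2 ≤ n) (dmin : ℕ) (hdmin : 1 ≤ dmin) (hdn : dmin ≤ n)
    (A : ℕ → ℕ) (hA_zero : ∀ d : ℕ, d < dmin → A d = 0) (hA_min : 1 ≤ A dmin)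
    (hA_sum : 3 ≤ ∑ d ∈ Finset.Icc 1 n, A d)
    (p₂ : ℝ → ℕ → ℝ)
    (hp_gt : ∀ (d : ℕ) (r : ℝ), Real.sqrt d < r →
      p₂ r d = (Real.Gamma ((n : ℝ) / 2) / (Real.sqrt π * Real.Gamma (((n : ℝ) - 1) / 2))) *
        ∫ φ in (0:ℝ)..(Real.arccos (Real.sqrt d / r)), (Real.sin φ) ^ (n - 2))
    (hp_le : ∀ (d : ℕ) (r : ℝ), 0 ≤ r → r ≤ Real.sqrt d → p₂ r d = 0)
    (F : ℝ → ℝ) (hF : ∀ r : ℝ, F r = ∑ d ∈ Finset.Icc 1 n, (A d : ℝ) * p₂ r d) :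
    ∃! r₁, r₁ ∈ Set.Ioi (Real.sqrt dmin) ∧ F r₁ = 1 := by
  have hsqrt : 0 < √dmin := sqrt_pos.mpr (by exact_mod_cast hdmin)
  have hp : ∀ d, ∀ r > 0, p₂ r d = capProb n d r := fun d r hr => by
    rcases lt_or_ge (√d) r with h | h
    · exact hp_gt d r h
    · rw [hp_le d r hr.le h, capProb_of_le hr h]
  have hFG : EqOn F (unionBound n A) (Ioi √dmin) := fun r hr => by
    rw [hF]
    exact Finset.sum_congr rfl fun d _ => by rw [hp d r (hsqrt.trans hr)]
  have hlimit : 1 < (∑ d ∈ Finset.Icc 1 n, (A d : ℝ)) / 2 := by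
    have : (3 : ℝ) ≤ ∑ d ∈ Finset.Icc 1 n, (A d : ℝ) := by exact_mod_cast hA_sum
    linarith
  obtain ⟨b, hb, hdmin_lt_b⟩ := (((tendsto_unionBound_atTop hn A).eventually
    (eventually_gt_nhds hlimit)).and (eventually_gt_atTop √dmin)).exists
  obtain ⟨r₁, hr₁, hFr₁⟩ := intermediate_value_Ioo hdmin_lt_b.le
    ((continuousOn_unionBound n A).mono fun r hr => hsqrt.trans_le hr.1)
    ⟨by rw [unionBound_sqrt_eq_zero hdmin hA_zero]; exact one_pos, hb⟩
  refine ⟨r₁, ⟨hr₁.1, (hFG hr₁.1).trans hFr₁⟩, fun r ⟨hr, hFr⟩ => ?_⟩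
  refine (strictMonoOn_unionBound hn hdmin hdn hA_min).injOn (Ioi_subset_Ici_self hr)
    (Ioi_subset_Ici_self hr₁.1) ?_
  rw [← hFG hr, hFr, hFr₁]
end
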